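/- Let 𝒞 be a family of subsets of a topological space X with the property that for every c ∈ 𝒞, every point of the boundary ∂c is contained in a fixed countable dense set D (e.g., is 'computable'), and suppose D is dense in X. Then for any c₁,…,c_k ∈ 𝒞 and any y ∈ X, there exists x ∈ D such that for each i, x ∈ cᵢ ↔ y ∈ cᵢ. -/
import Mathlib


/-- If `D` is a countable dense subset of a topological space `X` containing
the boundary of each of the sets `c i`, then for any point `y` there is a point
of `D` agreeing with `y` on membership in each `c i`. -/
theorem exists_dense_point_agreeing {X : Type*} [TopologicalSpace X]
    (D : Set X) (hDc : D.Countable) (hD : Dense D)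
    (k : ℕ) (c : Fin k → Set X) (hb : ∀ i, frontier (c i) ⊆ D) (y : X) :
    ∃ x ∈ D, ∀ i, x ∈ c i ↔ y ∈ c i := by
  classical
  by_cases hy : y ∈ D
  · exact ⟨y, hy, fun i => Iff.rfl⟩
  · -- y avoids every frontier, so it's in the interior or in the exterior of each c i
    have hfr : ∀ i, y ∉ frontier (c i) := fun i hf => hy (hb i hf)
    set U : Set X := ⋂ i, if y ∈ c i then interior (c i) else (closure (c i))ᶜ with hU
    have hUopen : IsOpen U := isOpen_iInter_of_finite fun i => by
      split
      · exact isOpen_interior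
      · exact isClosed_closure.isOpen_compl
    have hyU : y ∈ U := Set.mem_iInter.2 fun i => by
      by_cases h : y ∈ c i
      · simp only [h, if_true]
        by_contra hint
        exact hfr i ⟨subset_closure h, hint⟩
      · simp only [h, if_false]
        intro hcl
        exact hfr i ⟨hcl, fun hint => h (interior_subset hint)⟩
    obtain ⟨x, hxD, hxU⟩ := hD.exists_mem_open hUopen ⟨y, hyU⟩
    refine ⟨x, hxD, fun i => ?_⟩
    have hxi := Set.mem_iInter.1 hxU i
    by_cases h : y ∈ c i
    · simp only [h, if_true] at hxi
      exact ⟨fun _ => h, fun _ => interior_subset hxi⟩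
    · simp only [h, if_false] at hxi
      exact ⟨fun hx => absurd (subset_closure hx) hxi, fun hyc => absurd hyc h⟩
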